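/- arXiv:2106.01155 — 2 statements merged into one kernel-verified Lean document; each statement's English description precedes it below -/
import Mathlib

section
/- Let M be a Malcev algebra over F containing elements E, H, F with EH = E, FH = −F, EF = (1/2)H, and let u_i, v_i, u_j, v_j ∈ M satisfy, for k ∈ {i,j}: u_kH = u_k, v_kH = −v_k, u_kE = v_k, u_kF = 0, v_kE = 0, v_kF = −u_k. Then the following relations hold: (u_iu_j)E = −u_iv_j, (u_iv_j)E = −(1/2)v_iv_j, (v_iv_j)E = 0, (u_iu_j)F = 0, (u_iv_j)F = (1/2)u_iu_j, (v_iv_j)F = u_iv_j, (u_iu_j)H = −u_iu_j, (u_iv_j)H = 0, (v_iv_j)H = v_iv_j, and u_iv_j = v_iu_j. In particular, if u_j = u_i and v_j = v_i then u_iv_i = 0. -/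
/-!
Every relation is a linear consequence of one or two instances of the Malcev identity in
which some arguments are taken from the triple `E, H, F` and the others from the two
doublets: once the multiplication tables of the triple and of the doublets are substituted,
each instance becomes a linear equation between the products `u_i u_j, u_i v_j, v_i u_j, v_i v_j`
and their right multiples by `E, H, F`. The instances at `(E, H, u_i, u_j)` and
`(E, H, u_j, u_i)` add up to `3 (u_i v_j - v_i u_j) = 0`.
The relation `(u_i v_j)H = 0` is Sagle's rule: the Malcev identity at `(x, H, y, H)` shows that
eigenvectors of `R_H` with eigenvalues `α ≠ β` multiply to one with eigenvalue `α + β`.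
Finally, for `i = j` the symmetry `u_i v_i = v_i u_i` together with anticommutativity forces
`u_i v_i = 0`.
-/

section
variable {K : Type*} [Field K] {M : Type*} [AddCommGroup M] [Module K M]

/-- the Jacobian `J(x,y,z) = (xy)z + (yz)x + (zx)y` -/
def mjac (μ : M →ₗ[K] M →ₗ[K] M) (x y z : M) : M :=
  μ (μ x y) z + μ (μ y z) x + μ (μ z x) y

/-- `{x,y,z} = (xy)z − (xz)y + 2·x(yz)` -/
def mbr (μ : M →ₗ[K] M →ₗ[K] M) (x y z : M) : M :=
  μ (μ x y) z - μ (μ x z) y + (2 : K) • μ x (μ y z)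

/-- `h(y,z,t,x,u) = {yz,t,u}x + {yz,t,x}u + {yx,z,u}t + {yu,z,x}t` -/
def mh (μ : M →ₗ[K] M →ₗ[K] M) (y z t x u : M) : M :=
  μ (mbr μ (μ y z) t u) x + μ (mbr μ (μ y z) t x) u +
    μ (mbr μ (μ y x) z u) t + μ (mbr μ (μ y u) z x) t

/-- A Malcev algebra structure: anticommutative (`x·x = 0`) together with the Malcev
identity `(xz)(yt) = ((xy)z)t + ((yz)t)x + ((zt)x)y + ((tx)y)z`. -/
def IsMalcev (μ : M →ₗ[K] M →ₗ[K] M) : Prop :=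
  (∀ x, μ x x = 0) ∧
    ∀ x y z t, μ (μ x z) (μ y t) =
      μ (μ (μ x y) z) t + μ (μ (μ y z) t) x + μ (μ (μ z t) x) y + μ (μ (μ t x) y) z

/-- the variety 𝓗 : `h(y,z,t,x,u) = 0` identically -/
def InVarietyH (μ : M →ₗ[K] M →ₗ[K] M) : Prop := ∀ y z t x u, mh μ y z t x u = 0

/-- `N_M = {m | J(m,a,b) = 0 ∀ a,b ∈ L}` -/
def NMset (μ : M →ₗ[K] M →ₗ[K] M) (L : Submodule K M) : Set M :=
  {m : M | ∀ a ∈ L, ∀ b ∈ L, mjac μ m a b = 0}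

/-- `J_M = {m | {m,a,b} = 0 ∀ a,b ∈ L}` -/
def JMset (μ : M →ₗ[K] M →ₗ[K] M) (L : Submodule K M) : Set M :=
  {m : M | ∀ a ∈ L, ∀ b ∈ L, mbr μ m a b = 0}

theorem IsMalcev.mul_swap {μ : M →ₗ[K] M →ₗ[K] M} (hμ : IsMalcev μ) (x y : M) :
    μ x y = -μ y x := by
  have h := hμ.1 (x + y)
  simp only [map_add, LinearMap.add_apply, hμ.1 x, hμ.1 y, zero_add, add_zero] at h
  exact eq_neg_of_add_eq_zero_right h

namespace Malcev

variable {μ : M →ₗ[K] M →ₗ[K] M}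

theorem mul_mul_eq_add_smul_of_ne (hμ : IsMalcev μ) {H x y : M} {α β : K}
    (hx : μ x H = α • x) (hy : μ y H = β • y) (hαβ : α ≠ β) :
    μ (μ x y) H = (α + β) • μ x y := by
  have key := hμ.2 x H y H
  simp only [hx, hy, hμ.1 H, hμ.mul_swap H, hμ.mul_swap y x, map_zero, map_neg, map_smul,
    LinearMap.neg_apply, LinearMap.smul_apply] at key
  refine smul_right_injective M (sub_ne_zero.2 hαβ) ?_
  linear_combination (norm := module) -key

structure IsSl2Triple (μ : M →ₗ[K] M →ₗ[K] M) (E H F : M) : Prop where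
  mul_EH : μ E H = E
  mul_FH : μ F H = -F
  mul_EF : μ E F = (2⁻¹ : K) • H

/-- `u, v` is the standard basis of a copy of the two-dimensional non-Lie Malcev
`sl₂`-module. -/
structure IsNonLieDoublet (μ : M →ₗ[K] M →ₗ[K] M) (E H F u v : M) : Prop where
  mul_uH : μ u H = u
  mul_vH : μ v H = -v
  mul_uE : μ u E = v
  mul_uF : μ u F = 0
  mul_vE : μ v E = 0
  mul_vF : μ v F = -u

variable {E H F u₁ v₁ u₂ v₂ : M}

theorem IsSl2Triple.mul_table (hμ : IsMalcev μ) (hT : IsSl2Triple μ E H F) :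
    μ E H = E ∧ μ H E = -E ∧ μ F H = -F ∧ μ H F = F ∧ μ E F = (2⁻¹ : K) • H ∧
      μ F E = -((2⁻¹ : K) • H) ∧ μ E E = 0 ∧ μ H H = 0 ∧ μ F F = 0 := by
  refine ⟨hT.mul_EH, ?_, hT.mul_FH, ?_, hT.mul_EF, ?_, hμ.1 E, hμ.1 H, hμ.1 F⟩ <;>
    simp only [hμ.mul_swap H E, hμ.mul_swap H F, hμ.mul_swap F E, hT.mul_EH, hT.mul_FH,
      hT.mul_EF, neg_neg]

theorem IsNonLieDoublet.mul_table (hμ : IsMalcev μ) (h : IsNonLieDoublet μ E H F u₁ v₁) :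
    μ u₁ H = u₁ ∧ μ H u₁ = -u₁ ∧ μ v₁ H = -v₁ ∧ μ H v₁ = v₁ ∧ μ u₁ E = v₁ ∧ μ E u₁ = -v₁ ∧
      μ u₁ F = 0 ∧ μ F u₁ = 0 ∧ μ v₁ E = 0 ∧ μ E v₁ = 0 ∧ μ v₁ F = -u₁ ∧ μ F v₁ = u₁ := by
  refine ⟨h.mul_uH, ?_, h.mul_vH, ?_, h.mul_uE, ?_, h.mul_uF, ?_, h.mul_vE, ?_, h.mul_vF, ?_⟩ <;>
    simp only [hμ.mul_swap _ u₁, hμ.mul_swap _ v₁, h.mul_uH, h.mul_vH, h.mul_uE, h.mul_uF,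
      h.mul_vE, h.mul_vF, neg_neg, neg_zero]

theorem IsSl2Triple.uv_eq_vu (h3 : (3 : K) ≠ 0) (hμ : IsMalcev μ) (hT : IsSl2Triple μ E H F)
    (h₁ : IsNonLieDoublet μ E H F u₁ v₁) (h₂ : IsNonLieDoublet μ E H F u₂ v₂) :
    μ u₁ v₂ = μ v₁ u₂ := by
  have h₁₂ := hμ.2 E H u₁ u₂
  have h₂₁ := hμ.2 E H u₂ u₁
  simp only [hT.mul_table hμ, h₁.mul_table hμ, h₂.mul_table hμ, hμ.mul_swap u₂ u₁,
    hμ.mul_swap v₂ u₁, map_neg, LinearMap.neg_apply, neg_neg] at h₁₂ h₂₁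
  refine smul_right_injective M h3 ?_
  linear_combination (norm := module) -(h₁₂ + h₂₁)

theorem IsNonLieDoublet.uv_mul_H (h2 : (2 : K) ≠ 0) (hμ : IsMalcev μ)
    (h₁ : IsNonLieDoublet μ E H F u₁ v₁) (h₂ : IsNonLieDoublet μ E H F u₂ v₂) :
    μ (μ u₁ v₂) H = 0 := by
  have h := mul_mul_eq_add_smul_of_ne hμ (h₁.mul_uH.trans (one_smul K u₁).symm)
    (h₂.mul_vH.trans (neg_one_smul K v₂).symm) fun h => h2 (by linear_combination h)
  simpa only [add_neg_cancel, zero_smul] using h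

theorem IsSl2Triple.vv_mul_H (hμ : IsMalcev μ) (hT : IsSl2Triple μ E H F)
    (h₁ : IsNonLieDoublet μ E H F u₁ v₁) (h₂ : IsNonLieDoublet μ E H F u₂ v₂) :
    μ (μ v₁ v₂) H = μ v₁ v₂ := by
  have h := hμ.2 E v₁ H u₂
  simp only [hT.mul_table hμ, h₁.mul_table hμ, h₂.mul_table hμ, hμ.mul_swap v₂ v₁,
    hμ.mul_swap E (μ _ _), map_neg, map_zero, LinearMap.neg_apply, LinearMap.zero_apply, neg_neg,
    zero_add] at h
  linear_combination (norm := module) h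

theorem IsSl2Triple.uu_mul_H (hμ : IsMalcev μ) (hT : IsSl2Triple μ E H F)
    (h₁ : IsNonLieDoublet μ E H F u₁ v₁) (h₂ : IsNonLieDoublet μ E H F u₂ v₂) :
    μ (μ u₁ u₂) H = -μ u₁ u₂ := by
  have h₁₂ := hμ.2 H F v₁ u₂
  have h₂₁ := hμ.2 H F u₂ v₁
  simp only [hT.mul_table hμ, h₁.mul_table hμ, h₂.mul_table hμ, hμ.mul_swap u₂ u₁,
    hμ.mul_swap u₂ v₁, map_neg, map_zero, LinearMap.neg_apply, LinearMap.zero_apply, neg_neg,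
    zero_add, add_zero] at h₁₂ h₂₁
  linear_combination (norm := module) -(h₁₂ + h₂₁)

theorem IsSl2Triple.uv_mul_E (h2 : (2 : K) ≠ 0) (hμ : IsMalcev μ) (hT : IsSl2Triple μ E H F)
    (h₁ : IsNonLieDoublet μ E H F u₁ v₁) (h₂ : IsNonLieDoublet μ E H F u₂ v₂) :
    μ (μ u₁ v₂) E = -((2⁻¹ : K) • μ v₁ v₂) := by
  have h₁₂ := hμ.2 E H v₂ u₁
  have h₂₁ := hμ.2 E H u₁ v₂
  simp only [hT.mul_table hμ, h₁.mul_table hμ, h₂.mul_table hμ, hμ.mul_swap v₂ u₁, map_neg,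
    map_zero, LinearMap.neg_apply, LinearMap.zero_apply, neg_zero, zero_add, add_zero] at h₁₂ h₂₁
  linear_combination (norm := (match_scalars <;> field_simp <;> ring1)) (2⁻¹ : K) • (h₁₂ + h₂₁)

theorem IsSl2Triple.vv_mul_E (hμ : IsMalcev μ) (hT : IsSl2Triple μ E H F)
    (h₁ : IsNonLieDoublet μ E H F u₁ v₁) (h₂ : IsNonLieDoublet μ E H F u₂ v₂) :
    μ (μ v₁ v₂) E = 0 := by
  have h₁₂ := hμ.2 E E v₁ u₂
  have h₂₁ := hμ.2 E E u₂ v₁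
  simp only [hT.mul_table hμ, h₁.mul_table hμ, h₂.mul_table hμ, hμ.mul_swap u₂ v₁,
    hμ.mul_swap v₂ v₁, map_neg, map_zero, LinearMap.neg_apply, LinearMap.zero_apply, neg_neg,
    neg_zero, zero_add, add_zero] at h₁₂ h₂₁
  linear_combination (norm := module) -(h₁₂ + h₂₁)

theorem IsSl2Triple.uu_mul_F (hμ : IsMalcev μ) (hT : IsSl2Triple μ E H F)
    (h₁ : IsNonLieDoublet μ E H F u₁ v₁) (h₂ : IsNonLieDoublet μ E H F u₂ v₂) :
    μ (μ u₁ u₂) F = 0 := by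
  have h₁₂ := hμ.2 F F v₁ u₂
  have h₂₁ := hμ.2 F F u₂ v₁
  simp only [hT.mul_table hμ, h₁.mul_table hμ, h₂.mul_table hμ, hμ.mul_swap u₂ v₁, map_neg,
    map_zero, LinearMap.neg_apply, LinearMap.zero_apply, neg_zero, zero_add, add_zero] at h₁₂ h₂₁
  linear_combination (norm := module) -(h₁₂ + h₂₁)

theorem IsSl2Triple.uu_mul_E (h2 : (2 : K) ≠ 0) (h3 : (3 : K) ≠ 0) (hμ : IsMalcev μ)
    (hT : IsSl2Triple μ E H F) (h₁ : IsNonLieDoublet μ E H F u₁ v₁)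
    (h₂ : IsNonLieDoublet μ E H F u₂ v₂) :
    μ (μ u₁ u₂) E = -μ u₁ v₂ := by
  have h₁₂ := hμ.2 E F v₁ u₂
  have h₂₁ := hμ.2 E F u₂ v₁
  simp only [hT.mul_table hμ, h₁.mul_table hμ, h₂.mul_table hμ, hμ.mul_swap v₂ u₁,
    hμ.mul_swap u₂ v₁, map_neg, map_smul, map_zero, LinearMap.neg_apply, LinearMap.smul_apply,
    LinearMap.zero_apply, neg_neg, smul_neg, add_zero] at h₁₂ h₂₁
  linear_combination (norm := (match_scalars <;> field_simp <;> ring1))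
    -(h₁₂ + h₂₁) + (2 : K) • hT.uv_eq_vu h3 hμ h₁ h₂

theorem IsSl2Triple.uv_mul_F (h2 : (2 : K) ≠ 0) (hμ : IsMalcev μ) (hT : IsSl2Triple μ E H F)
    (h₁ : IsNonLieDoublet μ E H F u₁ v₁) (h₂ : IsNonLieDoublet μ E H F u₂ v₂) :
    μ (μ u₁ v₂) F = (2⁻¹ : K) • μ u₁ u₂ := by
  have h := hμ.2 E u₁ F u₂
  simp only [hT.mul_table hμ, h₁.mul_table hμ, h₂.mul_table hμ, hμ.mul_swap v₂ u₁,
    hμ.mul_swap H (μ _ _), map_neg, map_smul, map_zero, LinearMap.neg_apply, LinearMap.smul_apply,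
    LinearMap.zero_apply, neg_neg, smul_neg, add_zero] at h
  linear_combination (norm := (match_scalars <;> field_simp <;> ring1))
    h + (2⁻¹ : K) • hT.uu_mul_H hμ h₁ h₂

theorem IsSl2Triple.vv_mul_F (h2 : (2 : K) ≠ 0) (h3 : (3 : K) ≠ 0) (hμ : IsMalcev μ)
    (hT : IsSl2Triple μ E H F) (h₁ : IsNonLieDoublet μ E H F u₁ v₁)
    (h₂ : IsNonLieDoublet μ E H F u₂ v₂) :
    μ (μ v₁ v₂) F = μ u₁ v₂ := by
  have hvuH : μ (μ v₁ u₂) H = 0 := by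
    rw [hμ.mul_swap v₁, map_neg, LinearMap.neg_apply, h₂.uv_mul_H h2 hμ h₁, neg_zero]
  have h := hμ.2 E v₁ F u₂
  simp only [hT.mul_table hμ, h₁.mul_table hμ, h₂.mul_table hμ, hμ.mul_swap v₂ v₁,
    hμ.mul_swap H (μ _ _), map_neg, map_smul, map_zero, LinearMap.neg_apply, LinearMap.smul_apply,
    LinearMap.zero_apply, smul_neg, zero_add, add_zero] at h
  linear_combination (norm := module) h - hT.uu_mul_E h2 h3 hμ h₁ h₂ + (2⁻¹ : K) • hvuH

theorem IsNonLieDoublet.mul_eq_zero (h2 : (2 : K) ≠ 0) (h3 : (3 : K) ≠ 0) (hμ : IsMalcev μ)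
    (hT : IsSl2Triple μ E H F) (h : IsNonLieDoublet μ E H F u₁ v₁) : μ u₁ v₁ = 0 := by
  have h' : (2 : K) • μ u₁ v₁ = 0 := by
    linear_combination (norm := module) hT.uv_eq_vu h3 hμ h h + hμ.mul_swap v₁ u₁
  exact (smul_eq_zero.mp h').resolve_left h2

end Malcev

/-- Multiplication relations between two 2-dimensional non-Lie
Malcev `sl₂`-modules inside a Malcev algebra. -/
theorem stmt3
    (h2 : (2 : K) ≠ 0) (h3 : (3 : K) ≠ 0)
    (μ : M →ₗ[K] M →ₗ[K] M) (hMal : IsMalcev μ)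
    (E H F : M)
    (hEH : μ E H = E) (hFH : μ F H = -F) (hEF : μ E F = (2⁻¹ : K) • H)
    (ui vi uj vj : M)
    (hiH : μ ui H = ui) (hiH' : μ vi H = -vi) (hiE : μ ui E = vi)
    (hiF : μ ui F = 0) (hiE' : μ vi E = 0) (hiF' : μ vi F = -ui)
    (hjH : μ uj H = uj) (hjH' : μ vj H = -vj) (hjE : μ uj E = vj)
    (hjF : μ uj F = 0) (hjE' : μ vj E = 0) (hjF' : μ vj F = -uj) :
    μ (μ ui uj) E = -(μ ui vj) ∧
    μ (μ ui vj) E = -((2⁻¹ : K) • μ vi vj) ∧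
    μ (μ vi vj) E = 0 ∧
    μ (μ ui uj) F = 0 ∧
    μ (μ ui vj) F = (2⁻¹ : K) • μ ui uj ∧
    μ (μ vi vj) F = μ ui vj ∧
    μ (μ ui uj) H = -(μ ui uj) ∧
    μ (μ ui vj) H = 0 ∧
    μ (μ vi vj) H = μ vi vj ∧
    μ ui vj = μ vi uj ∧
    (uj = ui → vj = vi → μ ui vi = 0) := by
  have hT : Malcev.IsSl2Triple μ E H F := ⟨hEH, hFH, hEF⟩
  have hi : Malcev.IsNonLieDoublet μ E H F ui vi := ⟨hiH, hiH', hiE, hiF, hiE', hiF'⟩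
  have hj : Malcev.IsNonLieDoublet μ E H F uj vj := ⟨hjH, hjH', hjE, hjF, hjE', hjF'⟩
  refine ⟨hT.uu_mul_E h2 h3 hMal hi hj, hT.uv_mul_E h2 hMal hi hj, hT.vv_mul_E hMal hi hj,
    hT.uu_mul_F hMal hi hj, hT.uv_mul_F h2 hMal hi hj, hT.vv_mul_F h2 h3 hMal hi hj,
    hT.uu_mul_H hMal hi hj, hi.uv_mul_H h2 hMal hj, hT.vv_mul_H hMal hi hj,
    hT.uv_eq_vu h3 hMal hi hj, ?_⟩
  rintro rfl rfl
  exact hi.mul_eq_zero h2 h3 hMal hT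

end
end

section
/- Let M be a Malcev algebra over F and let u, v, a, b ∈ M satisfy {u,a,b} = 0 and {v,a,b} = 0. Then J(uv, a, b) = {ab, u, v}. -/
section
variable {K : Type*} [Field K] {M : Type*} [AddCommGroup M] [Module K M]

/-- In a Malcev algebra, if `{u,a,b} = 0` and `{v,a,b} = 0`,
then `J(uv,a,b) = {ab,u,v}`. -/
theorem stmt5
    (h2 : (2 : K) ≠ 0) (h3 : (3 : K) ≠ 0)
    (μ : M →ₗ[K] M →ₗ[K] M) (hMal : IsMalcev μ)
    (u v a b : M) (hu : mbr μ u a b = 0) (hv : mbr μ v a b = 0) :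
    mjac μ (μ u v) a b = mbr μ (μ a b) u v := by
  obtain ⟨hanti, hmal⟩ := hMal
  have skw : ∀ x y : M, μ x y = -(μ y x) := by
    intro x y
    have h := hanti (x + y)
    simp only [map_add, LinearMap.add_apply, hanti, zero_add, add_zero] at h
    exact eq_neg_of_add_eq_zero_right h
  have E1 := hmal u v b a
  have E2 := hmal u a v b
  have E3 := hmal u a b v
  have Hv : μ v (μ (μ u a) b) - μ v (μ (μ u b) a) + (2 : K) • μ v (μ u (μ a b)) = 0 := by
    have h : μ v (mbr μ u a b) = 0 := by rw [hu, map_zero]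
    rw [mbr, map_add, map_sub, map_smul] at h
    exact h
  have Hu : μ u (μ (μ v a) b) - μ u (μ (μ v b) a) + (2 : K) • μ u (μ v (μ a b)) = 0 := by
    have h : μ u (mbr μ v a b) = 0 := by rw [hv, map_zero]
    rw [mbr, map_add, map_sub, map_smul] at h
    exact h
  have s0 : μ (μ b (μ u v)) a = -(μ (μ (μ u v) b) a) := by
    simp only [skw b (μ u v), map_neg, LinearMap.neg_apply, neg_neg]
  have s1 : μ (μ u b) (μ v a) = -(μ (μ a v) (μ b u)) := by
    simp only [skw u b, skw v a, skw (μ b u) (μ a v), map_neg, LinearMap.neg_apply, neg_neg]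
  have s2 : μ (μ (μ v b) a) u = -(μ (μ (μ b v) a) u) := by
    simp only [skw v b, map_neg, LinearMap.neg_apply, neg_neg]
  have s3 : μ (μ (μ b a) u) v = -(μ (μ (μ a b) u) v) := by
    simp only [skw b a, map_neg, LinearMap.neg_apply, neg_neg]
  have s4 : μ (μ u v) (μ a b) = -(μ (μ a b) (μ u v)) := by
    simp only [skw (μ u v) (μ a b), map_neg, LinearMap.neg_apply, neg_neg]
  have s5 : μ (μ (μ u a) v) b = -(μ (μ (μ a u) v) b) := by
    simp only [skw u a, map_neg, LinearMap.neg_apply, neg_neg]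
  have s6 : μ (μ (μ v b) u) a = -(μ (μ (μ b v) u) a) := by
    simp only [skw v b, map_neg, LinearMap.neg_apply, neg_neg]
  have s7 : μ (μ u b) (μ a v) = μ (μ a v) (μ b u) := by
    simp only [skw u b, skw (μ b u) (μ a v), map_neg, LinearMap.neg_apply, neg_neg]
  have s8 : μ (μ (μ u a) b) v = -(μ (μ (μ a u) b) v) := by
    simp only [skw u a, map_neg, LinearMap.neg_apply, neg_neg]
  have s9 : μ (μ (μ v u) a) b = -(μ (μ (μ u v) a) b) := by
    simp only [skw v u, map_neg, LinearMap.neg_apply, neg_neg]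
  have s10 : μ v (μ (μ u a) b) = μ (μ (μ a u) b) v := by
    simp only [skw u a, skw v (μ (μ a u) b), map_neg, LinearMap.neg_apply, neg_neg]
  have s11 : μ v (μ (μ u b) a) = μ (μ (μ b u) a) v := by
    simp only [skw u b, skw v (μ (μ b u) a), map_neg, LinearMap.neg_apply, neg_neg]
  have s12 : μ v (μ u (μ a b)) = μ (μ (μ a b) u) v := by
    simp only [skw u (μ a b), skw v (μ (μ a b) u), map_neg, LinearMap.neg_apply, neg_neg]
  have s13 : μ u (μ (μ v a) b) = μ (μ (μ a v) b) u := by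
    simp only [skw v a, skw u (μ (μ a v) b), map_neg, LinearMap.neg_apply, neg_neg]
  have s14 : μ u (μ (μ v b) a) = μ (μ (μ b v) a) u := by
    simp only [skw v b, skw u (μ (μ b v) a), map_neg, LinearMap.neg_apply, neg_neg]
  have s15 : μ u (μ v (μ a b)) = μ (μ (μ a b) v) u := by
    simp only [skw v (μ a b), skw u (μ (μ a b) v), map_neg, LinearMap.neg_apply, neg_neg]
  simp only [mjac, mbr]
  linear_combination (norm := module) E1 + E2 + E3 - Hv + Hu + s0 - s1 + s2 + s3 - s4 + s5 + s6 - s7 + s8 + s9 + s10 - s11 + s12 + s12 - s13 + s14 - s15 - s15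


end
end
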